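/- Let {C_1,…,C_k} be an (α,γ)-clustering of X, let p ≠ q, let x ∈ C_q, and let 0 < ε ≤ γ − 1. Let Z_1,…,Z_m be independent X-valued random variables each with law P. Then with probability at least 1 − 3·exp(−(ε·(γ−1)·α / (√8·γ·(γ²+1)))²·m), the sets {j : Z_j ∈ C_p} and {j : Z_j ∈ C_q} are both nonempty and Δ_emp(x,C_p) ≥ (γ−ε)·Δ_emp(x,C_q). -/

import Mathlib

open Finset MeasureTheory ProbabilityTheory

/-- `P(A)`: the probability mass of a finite set `A`. -/
noncomputable def pOf {X : Type*} (P : X → ℝ) (A : Finset X) : ℝ := ∑ x ∈ A, P x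

/-- `Δ(x,A)`: the average distance from `x` to `A`,
weighted by the probability mass function `P` restricted to `A`. -/
noncomputable def Dpt {X : Type*} [MetricSpace X] (P : X → ℝ) (x : X) (A : Finset X) : ℝ :=
  (∑ y ∈ A, P y * dist x y) / pOf P A

/-- `{C_1,…,C_k}` is an `(α,γ)`-clustering: a partition of `X` into nonempty parts, each of
probability at least `α`, such that `Δ(x,C_j) ≥ γ·Δ(x,C_i)` for all `i ≠ j` and `x ∈ C_i`. -/
def IsGoodClustering {X : Type*} [Fintype X] [MetricSpace X] (P : X → ℝ) (α γ : ℝ)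
    {k : ℕ} (C : Fin k → Finset X) : Prop :=
  (∀ i, (C i).Nonempty) ∧
  (∀ i j, i ≠ j → Disjoint (C i) (C j)) ∧
  (∀ x : X, ∃ i, x ∈ C i) ∧
  (∀ i, α ≤ pOf P (C i)) ∧
  (∀ i j, i ≠ j → ∀ x ∈ C i, γ * Dpt P x (C i) ≤ Dpt P x (C j))

/-- The empirical proximity `Δ_emp(x,C)` of `x` to `C`, given sample values `Zv : Fin m → X`:
the average of `d(x, Z_j)` over those `j` with `Z_j ∈ C` (with value `0` if there are none). -/
noncomputable def Demp {X : Type*} [MetricSpace X] [DecidableEq X] {m : ℕ}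
    (Zv : Fin m → X) (x : X) (C : Finset X) : ℝ :=
  (∑ j ∈ Finset.univ.filter (fun j => Zv j ∈ C), dist x (Zv j)) /
    ((Finset.univ.filter (fun j => Zv j ∈ C)).card : ℝ)

/-!
Write `Δₚ = Δ(x,C_p)` and `Δ_q = Δ(x,C_q)`. The clustering gives `γ Δ_q ≤ Δₚ`, and `Δₚ > 0`
because `x ∉ C_p`. Averaging the triangle inequality over a cluster shows that every point of
`C_p ∪ C_q` lies within `(γ+1)/(γ-1) · Δₚ` of `x`. With `λ = ε/(γ(γ+1))`, the event can only
fail if the sample sum of `1_{C_p} (d(x,·) - (1-λ)Δₚ)` or of `1_{C_q} (Δ_q + λΔₚ - d(x,·))` is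
non-positive. Both summands have mean at least `λαΔₚ` and range `(γ+1)/(γ-1) · Δₚ`, so by
Hoeffding's inequality each of these events has probability at most `exp(-2t²m)` with
`t = λα(γ-1)/(γ+1)`, which is below the required bound. Off both events,
`(γ-ε) Δ_emp(x,C_q) ≤ (γ-ε)(Δ_q + λΔₚ) ≤ (1-λ)Δₚ < Δ_emp(x,C_p)`.
-/

namespace Finset

lemma nonempty_and_lt_average_of_sum_sub_pos {ι : Type*} {s : Finset ι} {h : ι → ℝ} {θ : ℝ}
    (hpos : 0 < ∑ i ∈ s, (h i - θ)) : s.Nonempty ∧ θ < (∑ i ∈ s, h i) / s.card := by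
  have hs : s.Nonempty := nonempty_of_sum_ne_zero hpos.ne'
  refine ⟨hs, ?_⟩
  rw [sum_sub_distrib, sum_const, nsmul_eq_mul] at hpos
  rw [lt_div_iff₀ (by exact_mod_cast hs.card_pos)]
  linarith

end Finset

lemma pOf_pos {X : Type*} {P : X → ℝ} {A : Finset X} (hP : ∀ y, 0 < P y) (hA : A.Nonempty) :
    0 < pOf P A :=
  sum_pos (fun y _ => hP y) hA

section Proximity

variable {X : Type*} [MetricSpace X] {P : X → ℝ}

lemma Dpt_nonneg (hP : ∀ y, 0 ≤ P y) (x : X) (A : Finset X) : 0 ≤ Dpt P x A :=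
  div_nonneg (sum_nonneg fun y _ => mul_nonneg (hP y) dist_nonneg) (sum_nonneg fun y _ => hP y)

lemma Dpt_pos {A : Finset X} (hP : ∀ y, 0 < P y) (hA : A.Nonempty) {x : X} (hx : x ∉ A) :
    0 < Dpt P x A :=
  div_pos (sum_pos (fun y hy => mul_pos (hP y) (dist_pos.2 (ne_of_mem_of_not_mem hy hx).symm)) hA)
    (pOf_pos hP hA)

lemma pOf_mul_Dpt (hP : ∀ y, 0 ≤ P y) (x : X) (A : Finset X) :
    pOf P A * Dpt P x A = ∑ y ∈ A, P y * dist x y := by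
  rcases (sum_nonneg fun y _ => hP y : 0 ≤ pOf P A).eq_or_lt with h0 | hpos
  · have hzero : ∀ y ∈ A, P y = 0 := (sum_eq_zero_iff_of_nonneg fun y _ => hP y).1 h0.symm
    rw [show pOf P A = 0 from h0.symm, zero_mul,
      sum_eq_zero fun y hy => by rw [hzero y hy, zero_mul]]
  · exact mul_div_cancel₀ _ hpos.ne'

lemma Dpt_le_dist_add_Dpt {A : Finset X} (hP : ∀ y, 0 < P y) (hA : A.Nonempty) (x z : X) :
    Dpt P x A ≤ dist x z + Dpt P z A := by
  have hw := pOf_pos hP hA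
  rw [Dpt, Dpt, div_le_iff₀ hw, add_mul, div_mul_cancel₀ _ hw.ne', pOf, mul_sum, ← sum_add_distrib]
  exact sum_le_sum fun y _ => by nlinarith [dist_triangle x z y, hP y]

lemma dist_le_Dpt_add_Dpt {A : Finset X} (hP : ∀ y, 0 < P y) (hA : A.Nonempty) (x z : X) :
    dist x z ≤ Dpt P x A + Dpt P z A := by
  have hw := pOf_pos hP hA
  rw [Dpt, Dpt, ← add_div, le_div_iff₀ hw, pOf, mul_sum, ← sum_add_distrib]
  exact sum_le_sum fun y _ => by nlinarith [dist_triangle_right x z y, hP y]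

end Proximity

namespace IsGoodClustering

variable {X : Type*} [Fintype X] [MetricSpace X] {P : X → ℝ} {α γ : ℝ} {k : ℕ}
  {C : Fin k → Finset X} {p q : Fin k} {x : X}

lemma nonempty (hC : IsGoodClustering P α γ C) (i : Fin k) : (C i).Nonempty := hC.1 i

lemma disjoint (hC : IsGoodClustering P α γ C) {i j : Fin k} (hij : i ≠ j) :
    Disjoint (C i) (C j) :=
  hC.2.1 i j hij

lemma le_pOf (hC : IsGoodClustering P α γ C) (i : Fin k) : α ≤ pOf P (C i) := hC.2.2.2.1 i

lemma mul_Dpt_le (hC : IsGoodClustering P α γ C) {i j : Fin k} (hij : i ≠ j) {x : X}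
    (hx : x ∈ C i) : γ * Dpt P x (C i) ≤ Dpt P x (C j) :=
  hC.2.2.2.2 i j hij x hx

lemma Dpt_pos_of_mem_of_ne (hC : IsGoodClustering P α γ C) (hP : ∀ y, 0 < P y) (hpq : p ≠ q)
    (hx : x ∈ C q) : 0 < Dpt P x (C p) :=
  Dpt_pos hP (hC.nonempty p) fun hxp => disjoint_left.1 (hC.disjoint hpq) hxp hx

lemma dist_le_of_mem_left (hC : IsGoodClustering P α γ C) (hP : ∀ y, 0 < P y)
    (hγ : 1 < γ) (hpq : p ≠ q) (hx : x ∈ C q) {y : X} (hy : y ∈ C p) :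
    dist x y ≤ (γ + 1) / (γ - 1) * Dpt P x (C p) := by
  rw [div_mul_eq_mul_div, le_div_iff₀ (sub_pos.2 hγ)]
  have hdist := dist_le_Dpt_add_Dpt hP (hC.nonempty p) x y
  have hsep_y := hC.mul_Dpt_le hpq hy
  have hDpt_y := Dpt_le_dist_add_Dpt hP (hC.nonempty q) y x
  have hsep_x := hC.mul_Dpt_le hpq.symm hx
  have hq := Dpt_nonneg (fun y => (hP y).le) x (C q)
  rw [dist_comm y x] at hDpt_y
  nlinarith

lemma dist_le_of_mem_right (hC : IsGoodClustering P α γ C) (hP : ∀ y, 0 < P y)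
    (hγ : 1 < γ) (hpq : p ≠ q) (hx : x ∈ C q) {y : X} (hy : y ∈ C q) :
    dist x y ≤ (γ + 1) / (γ - 1) * Dpt P x (C p) := by
  rw [div_mul_eq_mul_div, le_div_iff₀ (sub_pos.2 hγ)]
  have hdist := dist_le_Dpt_add_Dpt hP (hC.nonempty q) x y
  have hsep_y := hC.mul_Dpt_le hpq.symm hy
  have hDpt_y := Dpt_le_dist_add_Dpt hP (hC.nonempty p) y x
  have hsep_x := hC.mul_Dpt_le hpq.symm hx
  have hp := Dpt_nonneg (fun y => (hP y).le) x (C p)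
  rw [dist_comm y x] at hDpt_y
  nlinarith

end IsGoodClustering

section Sampling

variable {X : Type*} [Fintype X] [MeasurableSpace X] [MeasurableSingletonClass X]
  {Ω : Type*} [MeasurableSpace Ω] {μ : Measure Ω} [IsProbabilityMeasure μ] {P : X → ℝ}
  {m : ℕ} {Z : Fin m → Ω → X}

lemma one_sub_add_le_measureReal {E₁ E₂ T : Set Ω} {δ₁ δ₂ : ℝ} (h₁ : μ.real E₁ ≤ δ₁)
    (h₂ : μ.real E₂ ≤ δ₂) (h : ∀ ω, ω ∉ E₁ → ω ∉ E₂ → ω ∈ T) :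
    1 - (δ₁ + δ₂) ≤ μ.real T := by
  have hcover : Set.univ ⊆ E₁ ∪ E₂ ∪ T := fun ω _ => by
    by_cases h₁ : ω ∈ E₁ <;> by_cases h₂ : ω ∈ E₂ <;> simp [h₁, h₂, h ω]
  have := (measureReal_mono (μ := μ) hcover).trans ((measureReal_union_le _ _).trans
    (add_le_add_left (measureReal_union_le E₁ E₂) _))
  rw [probReal_univ] at this
  linarith

lemma integral_comp_eq_sum {W : Ω → X} (hW : Measurable W) (hP : ∀ y, 0 ≤ P y)
    (hlaw : ∀ y, μ (W ⁻¹' {y}) = ENNReal.ofReal (P y)) (f : X → ℝ) :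
    ∫ ω, f (W ω) ∂μ = ∑ y, P y * f y := by
  rw [← integral_map hW.aemeasurable (measurable_of_finite f).aestronglyMeasurable,
    integral_fintype .of_finite]
  refine Finset.sum_congr rfl fun y _ => ?_
  rw [smul_eq_mul, measureReal_def, Measure.map_apply hW (measurableSet_singleton y), hlaw,
    ENNReal.toReal_ofReal (hP y)]

lemma measureReal_sum_comp_nonpos_le (hmeas : ∀ j, Measurable (Z j))
    (hindep : iIndepFun Z μ) (hP : ∀ y, 0 ≤ P y)
    (hlaw : ∀ j y, μ (Z j ⁻¹' {y}) = ENNReal.ofReal (P y))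
    {f : X → ℝ} {a b t : ℝ} (hab : a < b) (hf : ∀ y, f y ∈ Set.Icc a b) (ht : 0 ≤ t)
    (hmean : t * (b - a) ≤ ∑ y, P y * f y) :
    μ.real {ω | ∑ j, f (Z j ω) ≤ 0} ≤ Real.exp (-2 * t ^ 2 * m) := by
  set mean := ∑ y, P y * f y
  have hsubG (j : Fin m) (_ : j ∈ univ) :
      HasSubgaussianMGF (fun ω => mean - f (Z j ω)) ((‖b - a‖₊ / 2) ^ 2) μ := by
    have h := hasSubgaussianMGF_of_mem_Icc (μ := μ) (X := fun ω => f (Z j ω))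
      ((measurable_of_finite f).comp (hmeas j)).aemeasurable (ae_of_all _ fun ω => hf (Z j ω))
    rw [integral_comp_eq_sum (hmeas j) hP (hlaw j)] at h
    exact h.neg.congr (ae_of_all _ fun ω => neg_sub _ _)
  have hindep' : iIndepFun (fun j ω => mean - f (Z j ω)) μ :=
    hindep.comp (fun _ y => mean - f y) fun _ => measurable_of_finite _
  have hHoeffding := HasSubgaussianMGF.measure_sum_ge_le_of_iIndepFun hindep' hsubG
    (ε := m * (t * (b - a))) (by positivity)
  refine (measureReal_mono fun ω hω => ?_).trans (hHoeffding.trans_eq ?_)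
  · simp only [Set.mem_ofPred_eq, sum_sub_distrib, sum_const, card_univ, Fintype.card_fin,
      nsmul_eq_mul] at hω ⊢
    nlinarith
  · rcases m.eq_zero_or_pos with rfl | hm
    · simp
    have hba : (‖b - a‖₊ : ℝ) = b - a := by simp [abs_of_pos (sub_pos.2 hab)]
    have hba_ne : b - a ≠ 0 := (sub_pos.2 hab).ne'
    push_cast [hba, sum_const, card_univ, Fintype.card_fin, nsmul_eq_mul]
    congr 1
    field_simp

lemma measureReal_not_lt_average_le [DecidableEq X] (hmeas : ∀ j, Measurable (Z j))
    (hindep : iIndepFun Z μ) (hP : ∀ y, 0 ≤ P y)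
    (hlaw : ∀ j y, μ (Z j ⁻¹' {y}) = ENNReal.ofReal (P y))
    {A : Finset X} {h : X → ℝ} {θ a b t : ℝ} (hab : a < b) (hh : ∀ y ∈ A, h y ∈ Set.Icc a b)
    (hθ : θ ∈ Set.Icc a b) (ht : 0 ≤ t) (hmean : t * (b - a) ≤ ∑ y ∈ A, P y * (h y - θ)) :
    μ.real {ω | ¬ ((univ.filter fun j => Z j ω ∈ A).Nonempty ∧
      θ < (∑ j ∈ univ.filter (fun j => Z j ω ∈ A), h (Z j ω)) /
        (univ.filter fun j => Z j ω ∈ A).card)} ≤ Real.exp (-2 * t ^ 2 * m) := by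
  let f : X → ℝ := fun y => if y ∈ A then h y - θ else 0
  have hf : ∀ y, f y ∈ Set.Icc (a - θ) (b - θ) := fun y => by
    by_cases hy : y ∈ A
    · simpa [f, hy] using hh y hy
    · simpa [f, hy] using hθ
  have hfmean : t * (b - θ - (a - θ)) ≤ ∑ y, P y * f y := by
    simpa [f, mul_ite, ← sum_filter] using hmean
  refine (measureReal_mono fun ω hω => ?_).trans (measureReal_sum_comp_nonpos_le hmeas hindep hP
    hlaw (by linarith) hf ht hfmean)
  by_contra hpos
  have hsum : 0 < ∑ j ∈ univ.filter (fun j => Z j ω ∈ A), (h (Z j ω) - θ) := by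
    rw [sum_filter]
    exact not_le.1 hpos
  exact hω (nonempty_and_lt_average_of_sum_sub_pos hsum)

lemma measureReal_not_lt_Demp_le [MetricSpace X] [DecidableEq X] (hmeas : ∀ j, Measurable (Z j))
    (hindep : iIndepFun Z μ) (hP : ∀ y, 0 ≤ P y)
    (hlaw : ∀ j y, μ (Z j ⁻¹' {y}) = ENNReal.ofReal (P y))
    {A : Finset X} {x : X} {θ D t : ℝ} (hD : 0 < D) (hdist : ∀ y ∈ A, dist x y ≤ D)
    (hθ : θ ∈ Set.Icc 0 D) (ht : 0 ≤ t) (hmean : t * D ≤ pOf P A * (Dpt P x A - θ)) :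
    μ.real {ω | ¬ ((univ.filter fun j => Z j ω ∈ A).Nonempty ∧
      θ < Demp (Z · ω) x A)} ≤ Real.exp (-2 * t ^ 2 * m) := by
  refine measureReal_not_lt_average_le hmeas hindep hP hlaw hD
    (fun y hy => ⟨dist_nonneg, hdist y hy⟩) hθ ht ?_
  rw [mul_sub, pOf_mul_Dpt hP, pOf, sum_mul, ← sum_sub_distrib] at hmean
  simpa only [sub_zero, mul_sub] using hmean

lemma measureReal_not_Demp_lt_le [MetricSpace X] [DecidableEq X] (hmeas : ∀ j, Measurable (Z j))
    (hindep : iIndepFun Z μ) (hP : ∀ y, 0 ≤ P y)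
    (hlaw : ∀ j y, μ (Z j ⁻¹' {y}) = ENNReal.ofReal (P y))
    {A : Finset X} {x : X} {θ D t : ℝ} (hD : 0 < D) (hdist : ∀ y ∈ A, dist x y ≤ D)
    (hθ : θ ∈ Set.Icc 0 D) (ht : 0 ≤ t) (hmean : t * D ≤ pOf P A * (θ - Dpt P x A)) :
    μ.real {ω | ¬ ((univ.filter fun j => Z j ω ∈ A).Nonempty ∧
      Demp (Z · ω) x A < θ)} ≤ Real.exp (-2 * t ^ 2 * m) := by
  have h := measureReal_not_lt_average_le hmeas hindep hP hlaw (h := fun y => -dist x y)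
    (θ := -θ) (neg_lt_zero.2 hD) (fun y hy => ⟨neg_le_neg (hdist y hy), neg_nonpos.2 dist_nonneg⟩)
    ⟨neg_le_neg hθ.2, neg_nonpos.2 hθ.1⟩ ht ?_
  · simpa [Demp, sum_neg_distrib, neg_div] using h
  rw [mul_sub, pOf_mul_Dpt hP, pOf, sum_mul, ← sum_sub_distrib] at hmean
  simpa only [sub_neg_eq_add, zero_add, neg_add_eq_sub, mul_sub] using hmean

end Sampling

namespace IsGoodClustering

variable {X : Type*} [Fintype X] [MetricSpace X] [DecidableEq X] [MeasurableSpace X]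
  [MeasurableSingletonClass X] {Ω : Type*} [MeasurableSpace Ω] {μ : Measure Ω}
  [IsProbabilityMeasure μ] {P : X → ℝ} {α γ : ℝ} {k : ℕ} {C : Fin k → Finset X} {p q : Fin k}
  {x : X} {m : ℕ} {Z : Fin m → Ω → X}

lemma measureReal_not_lt_Demp_left_le (hC : IsGoodClustering P α γ C) (hP : ∀ y, 0 < P y)
    (hα : 0 < α) (hγ : 1 < γ) (hpq : p ≠ q) (hx : x ∈ C q) (hmeas : ∀ j, Measurable (Z j))
    (hindep : iIndepFun Z μ) (hlaw : ∀ j y, μ (Z j ⁻¹' {y}) = ENNReal.ofReal (P y))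
    {lam : ℝ} (hlam0 : 0 ≤ lam) (hlam1 : lam ≤ 1) :
    μ.real {ω | ¬ ((univ.filter fun j => Z j ω ∈ C p).Nonempty ∧
      (1 - lam) * Dpt P x (C p) < Demp (Z · ω) x (C p))} ≤
      Real.exp (-2 * (lam * α * (γ - 1) / (γ + 1)) ^ 2 * m) := by
  have hΔ := hC.Dpt_pos_of_mem_of_ne hP hpq hx
  have hγ' : 0 < γ - 1 := sub_pos.2 hγ
  refine measureReal_not_lt_Demp_le hmeas hindep (fun y => (hP y).le) hlaw
    (D := (γ + 1) / (γ - 1) * Dpt P x (C p)) (by positivity)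
    (fun y hy => hC.dist_le_of_mem_left hP hγ hpq hx hy)
    ⟨?_, ?_⟩ (by positivity) ?_
  · exact mul_nonneg (sub_nonneg.2 hlam1) hΔ.le
  · calc (1 - lam) * Dpt P x (C p) ≤ Dpt P x (C p) := mul_le_of_le_one_left hΔ.le (by linarith)
      _ ≤ _ := le_mul_of_one_le_left hΔ.le ((one_le_div hγ').2 (by linarith))
  · calc lam * α * (γ - 1) / (γ + 1) * ((γ + 1) / (γ - 1) * Dpt P x (C p))
        = α * (lam * Dpt P x (C p)) := by field_simp
      _ ≤ pOf P (C p) * (lam * Dpt P x (C p)) := by gcongr; exact hC.le_pOf p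
      _ = _ := by ring

lemma measureReal_not_Demp_lt_right_le (hC : IsGoodClustering P α γ C) (hP : ∀ y, 0 < P y)
    (hα : 0 < α) (hγ : 1 < γ) (hpq : p ≠ q) (hx : x ∈ C q) (hmeas : ∀ j, Measurable (Z j))
    (hindep : iIndepFun Z μ) (hlaw : ∀ j y, μ (Z j ⁻¹' {y}) = ENNReal.ofReal (P y))
    {lam : ℝ} (hlam0 : 0 ≤ lam) (hlam : γ * lam ≤ γ - 1) :
    μ.real {ω | ¬ ((univ.filter fun j => Z j ω ∈ C q).Nonempty ∧
      Demp (Z · ω) x (C q) < Dpt P x (C q) + lam * Dpt P x (C p))} ≤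
      Real.exp (-2 * (lam * α * (γ - 1) / (γ + 1)) ^ 2 * m) := by
  have hΔ := hC.Dpt_pos_of_mem_of_ne hP hpq hx
  have hsep := hC.mul_Dpt_le hpq.symm hx
  have hγ' : 0 < γ - 1 := sub_pos.2 hγ
  refine measureReal_not_Demp_lt_le hmeas hindep (fun y => (hP y).le) hlaw
    (D := (γ + 1) / (γ - 1) * Dpt P x (C p)) (by positivity)
    (fun y hy => hC.dist_le_of_mem_right hP hγ hpq hx hy)
    ⟨?_, ?_⟩ (by positivity) ?_
  · exact add_nonneg (Dpt_nonneg (fun y => (hP y).le) x _) (mul_nonneg hlam0 hΔ.le)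
  · calc Dpt P x (C q) + lam * Dpt P x (C p) ≤ Dpt P x (C p) := by
          refine le_of_mul_le_mul_left ?_ (by linarith : 0 < γ)
          nlinarith
      _ ≤ _ := le_mul_of_one_le_left hΔ.le ((one_le_div hγ').2 (by linarith))
  · calc lam * α * (γ - 1) / (γ + 1) * ((γ + 1) / (γ - 1) * Dpt P x (C p))
        = α * (lam * Dpt P x (C p)) := by field_simp
      _ ≤ pOf P (C q) * (lam * Dpt P x (C p)) := by gcongr; exact hC.le_pOf q
      _ = _ := by ring

end IsGoodClustering

lemma sq_le_two_mul_sq_sampling_exponent {α γ ε lam : ℝ} (hγ : 1 < γ)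
    (hlam : γ * lam * (γ + 1) = ε) :
    (ε * (γ - 1) * α / (Real.sqrt 8 * γ * (γ ^ 2 + 1))) ^ 2 ≤
      2 * (lam * α * (γ - 1) / (γ + 1)) ^ 2 := by
  have hγ0 : 0 < γ := by linarith
  have hlhs : (ε * (γ - 1) * α / (Real.sqrt 8 * γ * (γ ^ 2 + 1))) ^ 2 =
      (lam * α * (γ - 1)) ^ 2 / (8 * (γ ^ 2 + 1) ^ 2 / (γ + 1) ^ 2) := by
    rw [← hlam, div_pow, mul_pow (Real.sqrt 8 * γ), mul_pow (Real.sqrt 8),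
      Real.sq_sqrt (by norm_num)]
    field_simp
  have hrhs : 2 * (lam * α * (γ - 1) / (γ + 1)) ^ 2 =
      (lam * α * (γ - 1)) ^ 2 / ((γ + 1) ^ 2 / 2) := by
    field_simp
  have hsq : (γ + 1) ^ 2 ≤ 4 * (γ ^ 2 + 1) := by nlinarith [sq_nonneg (γ - 1)]
  rw [hlhs, hrhs]
  refine div_le_div_of_nonneg_left (sq_nonneg _) (by positivity) ?_
  rw [div_le_div_iff₀ (by norm_num) (by positivity)]
  nlinarith [pow_le_pow_left₀ (by positivity) hsq 2]

theorem stmt_3_general {X : Type*} [Fintype X] [MetricSpace X] [DecidableEq X]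
    [MeasurableSpace X] [MeasurableSingletonClass X]
    (P : X → ℝ) (hP : ∀ x, 0 < P x)
    (α γ : ℝ) (hα : 0 < α) (hγ : 1 < γ)
    {k : ℕ} (C : Fin k → Finset X) (hC : IsGoodClustering P α γ C)
    (p q : Fin k) (hpq : p ≠ q) (x : X) (hx : x ∈ C q)
    (ε : ℝ) (hε : 0 < ε) (hεγ : ε ≤ γ - 1)
    {Ω : Type*} [MeasurableSpace Ω] (μ : Measure Ω) [IsProbabilityMeasure μ]
    (m : ℕ) (Z : Fin m → Ω → X) (hmeas : ∀ j, Measurable (Z j))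
    (hindep : iIndepFun Z μ)
    (hlaw : ∀ j, ∀ y : X, μ (Z j ⁻¹' {y}) = ENNReal.ofReal (P y)) :
    1 - 3 * Real.exp (-(ε * (γ - 1) * α / (Real.sqrt 8 * γ * (γ ^ 2 + 1))) ^ 2 * m) ≤
      (μ {ω | (Finset.univ.filter (fun j => Z j ω ∈ C p)).Nonempty ∧
              (Finset.univ.filter (fun j => Z j ω ∈ C q)).Nonempty ∧
              (γ - ε) * Demp (fun j => Z j ω) x (C q) ≤
                Demp (fun j => Z j ω) x (C p)}).toReal := by
  obtain ⟨lam, hlam0, hlam⟩ : ∃ lam : ℝ, 0 ≤ lam ∧ γ * lam * (γ + 1) = ε :=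
    ⟨ε / (γ * (γ + 1)), by positivity, by field_simp⟩
  have hlam1 : γ * lam ≤ γ - 1 := by nlinarith
  have hEp := hC.measureReal_not_lt_Demp_left_le hP hα hγ hpq hx hmeas hindep hlaw hlam0
    (by nlinarith)
  have hEq := hC.measureReal_not_Demp_lt_right_le hP hα hγ hpq hx hmeas hindep hlaw hlam0 hlam1
  have hthreshold : (γ - ε) * (Dpt P x (C q) + lam * Dpt P x (C p)) ≤
      (1 - lam) * Dpt P x (C p) := by
    have hsep := hC.mul_Dpt_le hpq.symm hx
    have hΔ := hC.Dpt_pos_of_mem_of_ne hP hpq hx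
    refine le_of_mul_le_mul_left ?_ (by linarith : 0 < γ)
    nlinarith [mul_le_mul_of_nonneg_left hsep (by linarith : 0 ≤ γ - ε),
      mul_nonneg (mul_nonneg hlam0 hε.le) hΔ.le, congrArg (· * Dpt P x (C p)) hlam]
  have hexp : Real.exp (-2 * (lam * α * (γ - 1) / (γ + 1)) ^ 2 * m) ≤
      Real.exp (-(ε * (γ - 1) * α / (Real.sqrt 8 * γ * (γ ^ 2 + 1))) ^ 2 * m) :=
    Real.exp_le_exp.2 (by nlinarith [sq_le_two_mul_sq_sampling_exponent (α := α) hγ hlam,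
      (Nat.cast_nonneg m : (0 : ℝ) ≤ m)])
  refine le_trans (by linarith [Real.exp_pos (-2 * (lam * α * (γ - 1) / (γ + 1)) ^ 2 * m)])
    (one_sub_add_le_measureReal hEp hEq fun ω hωp hωq => ?_)
  obtain ⟨hNp, hp⟩ := not_not.1 hωp
  obtain ⟨hNq, hq⟩ := not_not.1 hωq
  exact ⟨hNp, hNq, by nlinarith⟩

/-- Sampling lemma: if `{C_1,…,C_k}` is an `(α,γ)`-clustering, `p ≠ q`, `x ∈ C_q` and
`0 < ε ≤ γ − 1`, then for an i.i.d. sample `Z_1,…,Z_m` with law `P`, with probability at least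
`1 − 3·exp(−(ε(γ−1)α/(√8·γ·(γ²+1)))²·m)` the sample hits both `C_p` and `C_q` and
`Δ_emp(x,C_p) ≥ (γ−ε)·Δ_emp(x,C_q)`. -/
theorem stmt_3 {X : Type*} [Fintype X] [MetricSpace X] [DecidableEq X]
    [MeasurableSpace X] [MeasurableSingletonClass X]
    (P : X → ℝ) (hP : ∀ x, 0 < P x) (hsum : ∑ x, P x = 1)
    (α γ : ℝ) (hα : 0 < α) (hγ : 1 < γ)
    {k : ℕ} (C : Fin k → Finset X) (hC : IsGoodClustering P α γ C)
    (p q : Fin k) (hpq : p ≠ q) (x : X) (hx : x ∈ C q)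
    (ε : ℝ) (hε : 0 < ε) (hεγ : ε ≤ γ - 1)
    {Ω : Type*} [MeasurableSpace Ω] (μ : Measure Ω) [IsProbabilityMeasure μ]
    (m : ℕ) (Z : Fin m → Ω → X) (hmeas : ∀ j, Measurable (Z j))
    (hindep : iIndepFun Z μ)
    (hlaw : ∀ j, ∀ y : X, μ (Z j ⁻¹' {y}) = ENNReal.ofReal (P y)) :
    1 - 3 * Real.exp (-(ε * (γ - 1) * α / (Real.sqrt 8 * γ * (γ ^ 2 + 1))) ^ 2 * m) ≤
      (μ {ω | (Finset.univ.filter (fun j => Z j ω ∈ C p)).Nonempty ∧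
              (Finset.univ.filter (fun j => Z j ω ∈ C q)).Nonempty ∧
              (γ - ε) * Demp (fun j => Z j ω) x (C q) ≤
                Demp (fun j => Z j ω) x (C p)}).toReal :=
  stmt_3_general P hP α γ hα hγ C hC p q hpq x hx ε hε hεγ μ m Z hmeas hindep hlaw
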